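/- arXiv:2011.13457 — 6 statements merged into one kernel-verified Lean document; each statement's English description precedes it below -/
import Mathlib

section
/- For an n×n complex matrix A with positive definite Hermitian part (i.e., the quadratic form has positive real part), the Gaussian integral ∫ exp(-∑_{j,k} A_{jk} z_j z̄_k) ∏_j (dRe z_j dIm z_j / π) over ℂⁿ equals 1/det A. -/
/-!
Induction on `n`, integrating out the first coordinate. With `a = A 0 0` and `S` the Schur
complement of `a` in `A`, completing the square gives
`Q_A (x, w) = a (x + v/a) (conj x + u/a) + Q_S w` for linear forms `u, v` in `w`. Since `u/a` is not
the conjugate of `v/a`, the `x`-integral is not a plain translate of `∫ exp (-a |x|²)`, but splitting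
into real and imaginary parts still gives `π / a`. Together with `det A = a * det S` and
`Q_S w = Q_A (-v/a, w)` (so `S` inherits the hypothesis), this is the induction step. Fubini
applies because `Re Q_A z ≥ ε ‖z‖²`, by compactness of the unit sphere.
-/

open scoped Real ComplexConjugate
open MeasureTheory Complex Matrix

theorem exists_pos_mul_sq_norm_le_of_homogeneous {E : Type*} [NormedAddCommGroup E]
    [NormedSpace ℝ E] [ProperSpace E] {f : E → ℝ} (hf : Continuous f)
    (hsmul : ∀ (r : ℝ) x, f (r • x) = r ^ 2 * f x) (hpos : ∀ x, x ≠ 0 → 0 < f x) :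
    ∃ ε > 0, ∀ x, ε * ‖x‖ ^ 2 ≤ f x := by
  have hf0 : f 0 = 0 := by simpa using hsmul 0 0
  rcases subsingleton_or_nontrivial E with hE | hE
  · exact ⟨1, one_pos, fun x => by simp [Subsingleton.elim x 0, hf0]⟩
  obtain ⟨x₀, hx₀, hmin⟩ := (isCompact_sphere (0 : E) 1).exists_isMinOn
    (NormedSpace.sphere_nonempty.mpr zero_le_one) hf.continuousOn
  refine ⟨f x₀, hpos x₀ (ne_zero_of_mem_unit_sphere ⟨x₀, hx₀⟩), fun x => ?_⟩
  rcases eq_or_ne x 0 with rfl | hx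
  · simp [hf0]
  have hnorm : ‖x‖ ≠ 0 := norm_ne_zero_iff.mpr hx
  have hunit : ‖x‖⁻¹ • x ∈ Metric.sphere (0 : E) 1 := by
    simp [norm_smul, hnorm]
  calc f x₀ * ‖x‖ ^ 2 ≤ f (‖x‖⁻¹ • x) * ‖x‖ ^ 2 := by gcongr; exact hmin hunit
    _ = f x := by rw [hsmul]; field_simp

theorem integral_eq_integral_integral_cons {n : ℕ} {E F : Type*} [MeasureSpace E] [SigmaFinite (volume : Measure E)]
    [NormedAddCommGroup F] [NormedSpace ℝ F] {f : (Fin (n + 1) → E) → F} (hf : Integrable f) :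
    ∫ z, f z = ∫ w, ∫ x, f (Fin.cons x w) := by
  have he := (volume_preserving_piFinSuccAbove (fun _ : Fin (n + 1) => E) 0).symm
  have hcons : ⇑(MeasurableEquiv.piFinSuccAbove (fun _ : Fin (n + 1) => E) 0).symm =
      fun p : E × (Fin n → E) => Fin.cons p.1 p.2 := by
    ext p : 1
    simp [MeasurableEquiv.piFinSuccAbove_symm_apply, Fin.insertNthEquiv, Fin.insertNth_zero']
  have hf' := (he.integrable_comp_emb (MeasurableEquiv.measurableEmbedding _)).mpr hf
  rw [← he.integral_comp' f]
  rw [hcons] at hf' ⊢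
  exact integral_prod_symm _ hf'

theorem integral_cexp_neg_mul_add_mul_conj_add {a : ℂ} (ha : 0 < a.re) (p q : ℂ) :
    ∫ z : ℂ, cexp (-(a * (z + p) * (conj z + q))) = π / a := by
  have ha0 : a ≠ 0 := fun h => by simp [h] at ha
  have hre : (-a).re < 0 := by simpa using ha
  have hsplit : ∀ x y : ℝ, cexp (-(a * (⟨x, y⟩ + p) * (conj ⟨x, y⟩ + q))) =
      cexp (-a * (x : ℂ) ^ 2 + -(a * (p + q)) * x + -(a * p * q)) *
        cexp (-a * (y : ℂ) ^ 2 + -(a * (q - p) * I) * y + 0) := by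
    intro x y
    rw [← Complex.exp_add, mk_eq_add_mul_I, map_add, map_mul, conj_ofReal, conj_ofReal, conj_I]
    congr 1
    linear_combination (a * (y : ℂ) ^ 2) * I_sq
  have hexp : -(a * p * q) - (-(a * (p + q))) ^ 2 / (4 * -a) +
      (0 - (-(a * (q - p) * I)) ^ 2 / (4 * -a)) = 0 := by
    rw [neg_sq (a * (q - p) * I), mul_pow, I_sq]
    field_simp
    ring
  rw [← (volume_preserving_equiv_real_prod.symm measurableEquivRealProd).integral_comp',
    Measure.volume_eq_prod]
  simp only [measurableEquivRealProd_symm_apply, hsplit]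
  rw [integral_prod_mul (fun x : ℝ => cexp (-a * (x : ℂ) ^ 2 + -(a * (p + q)) * x + -(a * p * q)))
      (fun y : ℝ => cexp (-a * (y : ℂ) ^ 2 + -(a * (q - p) * I) * y + 0)),
    integral_cexp_quadratic hre, integral_cexp_quadratic hre, mul_mul_mul_comm, ← Complex.exp_add,
    hexp, Complex.exp_zero, mul_one, neg_neg,
    ← cpow_add _ _ (div_ne_zero (ofReal_ne_zero.mpr Real.pi_ne_zero) ha0)]
  norm_num

theorem integrable_exp_neg_mul_sum_sq_norm {ι : Type*} [Fintype ι] {δ : ℝ} (hδ : 0 < δ) :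
    Integrable fun z : ι → ℂ => Real.exp (-δ * ∑ j, ‖z j‖ ^ 2) := by
  have h1 : Integrable fun w : ℂ => Real.exp (-δ * ‖w‖ ^ 2) := by
    simpa [Complex.norm_exp, ← ofReal_pow] using
      (GaussianFourier.integrable_cexp_neg_mul_sq_norm_add (V := ℂ) (b := δ) (by simpa) 0 0).norm
  simpa only [Finset.mul_sum, ← Real.exp_sum, volume_pi] using Integrable.fintype_prod fun _ : ι => h1

noncomputable def quadForm {ι : Type*} [Fintype ι] (A : Matrix ι ι ℂ) (z : ι → ℂ) : ℂ :=
  ∑ j, ∑ k, A j k * z j * conj (z k)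

section quadForm

variable {ι : Type*} [Fintype ι] (A : Matrix ι ι ℂ)

theorem continuous_quadForm : Continuous (quadForm A) := by
  unfold quadForm
  fun_prop

theorem quadForm_real_smul (r : ℝ) (z : ι → ℂ) : quadForm A (r • z) = r ^ 2 * quadForm A z := by
  simp only [quadForm, Finset.mul_sum, Pi.smul_apply, real_smul, map_mul, conj_ofReal]
  congr! 2
  ring

variable {A}

theorem quadForm_single [DecidableEq ι] (i : ι) :
    quadForm A (Pi.single i 1) = A i i := by
  simp [quadForm, Pi.single_apply]

theorem re_diag_pos (hA : ∀ z, z ≠ 0 → 0 < (quadForm A z).re) (i : ι) : 0 < (A i i).re := by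
  classical
  simpa [quadForm_single] using hA (Pi.single i 1) (by simp)

theorem integrable_cexp_neg_quadForm (hA : ∀ z, z ≠ 0 → 0 < (quadForm A z).re) :
    Integrable fun z => cexp (-quadForm A z) := by
  obtain ⟨ε, hε, hle⟩ := exists_pos_mul_sq_norm_le_of_homogeneous
    (continuous_re.comp (continuous_quadForm A))
    (fun r z => by simp [quadForm_real_smul, ← ofReal_pow]) hA
  simp only [Function.comp_apply] at hle
  have hδ : 0 < ε / (Fintype.card ι + 1) := by positivity
  refine (integrable_exp_neg_mul_sum_sq_norm hδ).mono'
    (continuous_quadForm A).neg.cexp.aestronglyMeasurable (ae_of_all _ fun z => ?_)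
  have hsum : ∑ j, ‖z j‖ ^ 2 ≤ (Fintype.card ι + 1) * ‖z‖ ^ 2 := by
    calc ∑ j, ‖z j‖ ^ 2 ≤ ∑ _j : ι, ‖z‖ ^ 2 := by gcongr with j; exact norm_le_pi_norm z j
      _ ≤ (Fintype.card ι + 1) * ‖z‖ ^ 2 := by
        rw [Finset.sum_const, Finset.card_univ, nsmul_eq_mul]
        gcongr
        linarith
  rw [Complex.norm_exp, neg_re, Real.exp_le_exp, neg_mul, neg_le_neg_iff, div_mul_eq_mul_div,
    div_le_iff₀ (by positivity)]
  nlinarith [hle z, mul_le_mul_of_nonneg_left hsum hε.le]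

end quadForm

def schurComplement {K : Type*} [Field K] {n : ℕ} (A : Matrix (Fin (n + 1)) (Fin (n + 1)) K) :
    Matrix (Fin n) (Fin n) K :=
  of fun i j => A i.succ j.succ - A i.succ 0 * A 0 j.succ / A 0 0

theorem det_eq_mul_det_schurComplement {K : Type*} [Field K] {n : ℕ}
    (A : Matrix (Fin (n + 1)) (Fin (n + 1)) K) (hA : A 0 0 ≠ 0) :
    A.det = A 0 0 * (schurComplement A).det := by
  let c : Fin (n + 1) → K := Fin.cons 0 fun i => A i.succ 0 / A 0 0
  let B : Matrix (Fin (n + 1)) (Fin (n + 1)) K := of fun i j => A i j - c i * A 0 j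
  have hAB : A.det = B.det :=
    det_eq_of_forall_row_eq_smul_add_const c 0 rfl fun i j => by simp [B, c]
  have hB0 : ∀ i : Fin n, B i.succ 0 = 0 := fun i => by simp [B, c, hA]
  have hBS : B.submatrix Fin.succ Fin.succ = schurComplement A := by
    ext i j
    simp only [submatrix_apply, of_apply, schurComplement, Fin.cons_succ, B, c]
    ring
  rw [hAB, det_succ_column_zero, Fin.sum_univ_succ]
  simp [hB0, hBS, B, c]

theorem quadForm_cons {n : ℕ} (A : Matrix (Fin (n + 1)) (Fin (n + 1)) ℂ) (hA : A 0 0 ≠ 0)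
    (x : ℂ) (w : Fin n → ℂ) :
    quadForm A (Fin.cons x w) =
      A 0 0 * (x + (∑ j, A j.succ 0 * w j) / A 0 0) *
          (conj x + (∑ k, A 0 k.succ * conj (w k)) / A 0 0) +
        quadForm (schurComplement A) w := by
  have hcons : quadForm A (Fin.cons x w) = A 0 0 * x * conj x + x * ∑ k, A 0 k.succ * conj (w k) +
      conj x * ∑ j, A j.succ 0 * w j + ∑ j, ∑ k, A j.succ k.succ * w j * conj (w k) := by
    simp only [quadForm, Fin.sum_univ_succ, Fin.cons_zero, Fin.cons_succ, Finset.sum_add_distrib,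
      Finset.mul_sum]
    ring_nf
  have hschur : quadForm (schurComplement A) w = ∑ j, ∑ k, A j.succ k.succ * w j * conj (w k) -
      (∑ j, A j.succ 0 * w j) * (∑ k, A 0 k.succ * conj (w k)) / A 0 0 := by
    simp only [quadForm, schurComplement, of_apply, sub_mul, Finset.sum_sub_distrib,
      Finset.sum_mul_sum, Finset.sum_div]
    congr 1
    exact Finset.sum_congr rfl fun j _ => Finset.sum_congr rfl fun k _ => by ring
  rw [hcons, hschur]
  field_simp
  ring

theorem re_quadForm_schurComplement_pos {n : ℕ} {A : Matrix (Fin (n + 1)) (Fin (n + 1)) ℂ}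
    (hA : ∀ z, z ≠ 0 → 0 < (quadForm A z).re) :
    ∀ w, w ≠ 0 → 0 < (quadForm (schurComplement A) w).re := by
  intro w hw
  have h := hA (Fin.cons (-(∑ j, A j.succ 0 * w j) / A 0 0) w)
    fun h => hw (funext fun i => by simpa using congrFun h i.succ)
  rwa [quadForm_cons A (ne_zero_of_re_pos (re_diag_pos hA 0)), neg_div, neg_add_cancel, mul_zero,
    zero_mul, zero_add] at h

theorem integral_cexp_neg_quadForm {n : ℕ} (A : Matrix (Fin n) (Fin n) ℂ)
    (hA : ∀ z, z ≠ 0 → 0 < (quadForm A z).re) :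
    ∫ z, cexp (-quadForm A z) = (π : ℂ) ^ n / A.det := by
  induction n with
  | zero => simp [quadForm, Measure.real, volume_pi]
  | succ n ih =>
    have ha := re_diag_pos hA 0
    have ha0 := ne_zero_of_re_pos ha
    calc ∫ z, cexp (-quadForm A z)
        = ∫ w, ∫ x, cexp (-quadForm A (Fin.cons x w)) :=
          integral_eq_integral_integral_cons (integrable_cexp_neg_quadForm hA)
      _ = ∫ w, π / A 0 0 * cexp (-quadForm (schurComplement A) w) := by
          congr 1 with w
          simp only [quadForm_cons A ha0, neg_add, Complex.exp_add]
          rw [integral_mul_const, integral_cexp_neg_mul_add_mul_conj_add ha]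
      _ = (π : ℂ) ^ (n + 1) / A.det := by
          rw [integral_const_mul, ih _ (re_quadForm_schurComplement_pos hA),
            det_eq_mul_det_schurComplement A ha0, pow_succ', div_mul_div_comm]

/-- Complex Gaussian integral: for an `n × n` complex matrix `A` whose Hermitian part is
positive definite, `∫ exp(-∑ A_{jk} z_j conj z_k) ∏ (dRe z_j dIm z_j / π) = 1 / det A`. -/
theorem complex_gaussian_integral {n : ℕ} (A : Matrix (Fin n) (Fin n) ℂ)
    (hpos : ∀ z : Fin n → ℂ, z ≠ 0 → 0 < (∑ j, ∑ k, A j k * z j * conj (z k)).re) :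
    ∫ z : Fin n → ℂ, Complex.exp (-∑ j, ∑ k, A j k * z j * conj (z k))
      = (π : ℂ) ^ n / A.det :=
  integral_cexp_neg_quadForm A hpos
end

section
/- Let φ₀(x) = x²/2 - ixE - log x and Λ(x,y) = (β/2)(x-y)² - φ₀(x)/2 - φ₀(y)/2 + Re φ₀(a₊), where a₊ = e^{iα₀} with sin α₀ = E/2, E ∈ (-2,2), and 0 < β < 1/4. Then for a = e^{iφ}, a' = e^{iφ'} on the unit circle, -Re Λ(e^{iφ}, e^{iφ'}) ≤ -((1-2β)/2)(sin φ - sin α₀)² - ((1-2β)/2)(sin φ' - sin α₀)². -/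
open Real Complex

/-! On the unit circle `log` is purely imaginary, so with `s = sin θ` one gets
`Re φ₀(e^{iθ}) = (cos 2θ)/2 + E s = 1/2 + E²/4 - (s - E/2)²`; since `sin α₀ = E/2`, the constant
`Re φ₀(a₊)` cancels and `-Re Λ` becomes
`-(β/2)(cos φ - cos φ')² + (β/2)(u - v)² - u²/2 - v²/2` with `u = sin φ - sin α₀`,
`v = sin φ' - sin α₀`. The claim is then `(u - v)² ≤ 2u² + 2v²`. -/

lemma exp_I_mul_ofReal_eq (θ : ℝ) :
    Complex.exp (Complex.I * θ) = (Real.cos θ : ℂ) + (Real.sin θ : ℂ) * Complex.I := by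
  rw [mul_comm, Complex.exp_mul_I, ← Complex.ofReal_cos, ← Complex.ofReal_sin]

lemma re_sq_exp_I_mul_sub (θ θ' : ℝ) :
    ((Complex.exp (Complex.I * θ) - Complex.exp (Complex.I * θ')) ^ 2).re
      = (Real.cos θ - Real.cos θ') ^ 2 - (Real.sin θ - Real.sin θ') ^ 2 := by
  simp [exp_I_mul_ofReal_eq, pow_two, Complex.cos_ofReal_re, Complex.sin_ofReal_re]

lemma re_log_exp_I_mul (θ : ℝ) : (Complex.log (Complex.exp (Complex.I * θ))).re = 0 := by
  simp [Complex.log_re, Complex.norm_exp]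

lemma re_phi0_exp_I_mul (E θ : ℝ) :
    ((Complex.exp (Complex.I * θ)) ^ 2 / 2 - Complex.I * Complex.exp (Complex.I * θ) * E
      - Complex.log (Complex.exp (Complex.I * θ))).re
      = 1 / 2 + (E / 2) ^ 2 - (Real.sin θ - E / 2) ^ 2 := by
  rw [Complex.sub_re, re_log_exp_I_mul, exp_I_mul_ofReal_eq]
  simp [pow_two, Complex.cos_ofReal_re, Complex.sin_ofReal_re]
  nlinarith [Real.sin_sq_add_cos_sq θ]

theorem re_Lambda_bound_general (E β α₀ : ℝ)
    (hβ : 0 < β)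
    (hα : Real.sin α₀ = E / 2)
    (φ₀ : ℂ → ℂ) (hφ₀ : φ₀ = fun x => x ^ 2 / 2 - Complex.I * x * E - Complex.log x)
    (Λ : ℂ → ℂ → ℂ)
    (hΛ : Λ = fun x y => (β / 2 : ℂ) * (x - y) ^ 2 - φ₀ x / 2 - φ₀ y / 2
      + ((φ₀ (Complex.exp (Complex.I * α₀))).re : ℂ)) :
    ∀ φ φ' : ℝ,
      -(Λ (Complex.exp (Complex.I * φ)) (Complex.exp (Complex.I * φ'))).re ≤
        -((1 - 2 * β) / 2) * (Real.sin φ - Real.sin α₀) ^ 2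
        - ((1 - 2 * β) / 2) * (Real.sin φ' - Real.sin α₀) ^ 2 := by
  intro φ φ'
  have re_φ₀ : ∀ θ : ℝ, (φ₀ (Complex.exp (Complex.I * θ))).re
      = 1 / 2 + Real.sin α₀ ^ 2 - (Real.sin θ - Real.sin α₀) ^ 2 := by
    intro θ
    rw [hφ₀, re_phi0_exp_I_mul, hα]
  have re_Λ : (Λ (Complex.exp (Complex.I * φ)) (Complex.exp (Complex.I * φ'))).re
      = β / 2 * ((Complex.exp (Complex.I * φ) - Complex.exp (Complex.I * φ')) ^ 2).re
        - (φ₀ (Complex.exp (Complex.I * φ))).re / 2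
        - (φ₀ (Complex.exp (Complex.I * φ'))).re / 2
        + (φ₀ (Complex.exp (Complex.I * α₀))).re := by
    rw [hΛ]
    simp
  rw [re_Λ, re_sq_exp_I_mul_sub, re_φ₀, re_φ₀, re_φ₀]
  nlinarith [mul_nonneg hβ.le (sq_nonneg (Real.cos φ - Real.cos φ')),
    mul_nonneg hβ.le (sq_nonneg (Real.sin φ + Real.sin φ' - 2 * Real.sin α₀))]

/-- For `φ₀(x) = x²/2 - ixE - log x`, `Λ(x,y) = (β/2)(x-y)² - φ₀(x)/2 - φ₀(y)/2 + Re φ₀(a₊)`,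
with `a₊ = e^{iα₀}`, `sin α₀ = E/2`, `E ∈ (-2,2)`, `0 < β < 1/4`, we have for points on the
unit circle:
`-Re Λ(e^{iφ}, e^{iφ'}) ≤ -((1-2β)/2)(sin φ - sin α₀)² - ((1-2β)/2)(sin φ' - sin α₀)²`. -/
theorem re_Lambda_bound (E β α₀ : ℝ) (hE : E ∈ Set.Ioo (-2 : ℝ) 2)
    (hβ : 0 < β) (hβ' : β < 1 / 4)
    (hα : Real.sin α₀ = E / 2) (hα' : α₀ ∈ Set.Ioo (-(π / 2)) (π / 2))
    (φ₀ : ℂ → ℂ) (hφ₀ : φ₀ = fun x => x ^ 2 / 2 - Complex.I * x * E - Complex.log x)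
    (Λ : ℂ → ℂ → ℂ)
    (hΛ : Λ = fun x y => (β / 2 : ℂ) * (x - y) ^ 2 - φ₀ x / 2 - φ₀ y / 2
      + ((φ₀ (Complex.exp (Complex.I * α₀))).re : ℂ)) :
    ∀ φ φ' : ℝ,
      -(Λ (Complex.exp (Complex.I * φ)) (Complex.exp (Complex.I * φ'))).re ≤
        -((1 - 2 * β) / 2) * (Real.sin φ - Real.sin α₀) ^ 2
        - ((1 - 2 * β) / 2) * (Real.sin φ' - Real.sin α₀) ^ 2 :=
  re_Lambda_bound_general E β α₀ hβ hα φ₀ hφ₀ Λ hΛ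
end

section
/- With μ, ν, κ, q as above (Re(μ±ν) > 0, κ = √(μ²-ν²), q = ν/(μ+κ)), one has |q| < 1. -/
open Complex

/-!
Write `μ + ν = s²` and `μ - ν = t²` with `s`, `t` in the open sector `|arg| < π/4`. Then `st` lies in
the right half-plane, so the branch condition on `κ` forces `κ = st`, and
`q = (s² - t²) / (s + t)² = (s - t) / (s + t)`. Finally `‖s - t‖ < ‖s + t‖` because
`Re (s * conj t) > 0`: the two roots differ in argument by less than `π/2`.
-/

namespace Complex

theorem exists_sq_eq_and_abs_im_lt_re {z : ℂ} (hz : 0 < z.re) :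
    ∃ s : ℂ, s ^ 2 = z ∧ |s.im| < s.re := by
  obtain ⟨w, hw⟩ : ∃ w : ℂ, w ^ 2 = z := IsAlgClosed.exists_pow_nat_eq z two_pos
  have hsq : w.im ^ 2 < w.re ^ 2 := by
    have : (w ^ 2).re = w.re ^ 2 - w.im ^ 2 := by simp [sq]
    rw [hw] at this
    linarith
  have habs : |w.im| < |w.re| := sq_lt_sq.mp hsq
  rcases le_or_gt w.re 0 with hre | hre
  · exact ⟨-w, by rw [neg_sq, hw], by simpa [abs_of_nonpos hre] using habs⟩
  · exact ⟨w, hw, by rwa [abs_of_pos hre] at habs⟩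

theorem abs_im_mul_im_lt_re_mul_re {s t : ℂ} (hs : |s.im| < s.re) (ht : |t.im| < t.re) :
    |s.im * t.im| < s.re * t.re := by
  rw [abs_mul]
  exact mul_lt_mul'' hs ht (abs_nonneg _) (abs_nonneg _)

theorem norm_sub_lt_norm_add_iff {s t : ℂ} :
    ‖s - t‖ < ‖s + t‖ ↔ 0 < s.re * t.re + s.im * t.im := by
  rw [← sq_lt_sq₀ (norm_nonneg _) (norm_nonneg _), Complex.sq_norm, Complex.sq_norm,
    normSq_apply, normSq_apply]
  simp only [sub_re, sub_im, add_re, add_im]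
  constructor <;> intro h <;> nlinarith

end Complex

/-- With `Re(μ±ν) > 0`, `κ = √(μ²-ν²)` (branch with `Re κ > 0`) and `q = ν/(μ+κ)`,
one has `|q| < 1`. -/
theorem gaussian_ratio_lt_one (μ ν κ : ℂ)
    (hp : 0 < (μ + ν).re) (hm : 0 < (μ - ν).re)
    (hκ : κ ^ 2 = μ ^ 2 - ν ^ 2) (hκre : 0 < κ.re) :
    ‖ν / (μ + κ)‖ < 1 := by
  obtain ⟨s, hs, hs_sector⟩ := exists_sq_eq_and_abs_im_lt_re hp
  obtain ⟨t, ht, ht_sector⟩ := exists_sq_eq_and_abs_im_lt_re hm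
  have hst := abs_lt.mp (abs_im_mul_im_lt_re_mul_re hs_sector ht_sector)
  have hκ_eq : κ = s * t := by
    have : κ ^ 2 = (s * t) ^ 2 := by rw [mul_pow, hs, ht, hκ]; ring
    refine (sq_eq_sq_iff_eq_or_eq_neg.mp this).resolve_right fun h => ?_
    rw [h, neg_re, mul_re] at hκre
    linarith
  have hsum : s + t ≠ 0 := fun h => by
    have := congr_arg re h
    simp only [add_re, zero_re] at this
    linarith [abs_nonneg s.im, abs_nonneg t.im]
  have hq : ν / (μ + κ) = (s - t) / (s + t) := by
    rw [hκ_eq, show ν = (s ^ 2 - t ^ 2) / 2 by linear_combination (ht - hs) / 2,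
      show μ + s * t = (s + t) ^ 2 / 2 by linear_combination (-hs - ht) / 2]
    field_simp
    ring
  rw [hq, norm_div, div_lt_one (norm_pos_iff.mpr hsum)]
  exact norm_sub_lt_norm_add_iff.mpr (by linarith)
end

section
/- Let Δ be a bounded operator diagonal in an orthonormal basis {φ_j}_{j≥0}, let F be a bounded tridiagonal operator in this basis (Fφ_j ∈ span{φ_{j-1}, φ_j, φ_{j+1}}) with ‖F‖ ≤ C, and set D = Δ + F where e^{-sD} and e^{-sΔ} are uniformly bounded for s ∈ [0,1]. Then for all l ≥ 1 and s ∈ [0,1], |(e^{-sD}φ₀, φ_l)| ≤ C₁^l s^l / ⌈l/2⌉! — in particular |(e^{-sD}φ₀, φ_l)| ≤ C₂ e^{-⌈l/2⌉ log ⌈l/2⌉} for l large. -/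
/-!
Write `A = -s(Δ + F)`. Since `Δ` is diagonal and `F` tridiagonal, `A` maps
`span {φ₀, …, φⱼ}` into `span {φ₀, …, φⱼ₊₁}`, so `Aᵐ φ₀ ⊥ φₗ` for `m < l`. Hence only the tail
`∑_{m ≥ l} Aᵐ / m!` of the exponential series contributes to `⟪e^A φ₀, φₗ⟫`, and that tail has
norm at most `‖A‖ˡ / l! · e^{‖A‖} ≤ sˡ ‖Δ + F‖ˡ e^{‖Δ + F‖} / l!`.
-/

open NormedSpace

open Finset Nat in
theorem norm_exp_sub_sum_range_le {𝕂 𝔸 : Type*} [RCLike 𝕂] [NormedRing 𝔸] [NormedAlgebra 𝕂 𝔸]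
    [CompleteSpace 𝔸] (a : 𝔸) {n : ℕ} (hn : 0 < n) :
    ‖exp a - ∑ m ∈ range n, (m !⁻¹ : 𝕂) • a ^ m‖ ≤ ‖a‖ ^ n / n ! * Real.exp ‖a‖ := by
  have htail : HasSum (fun k => ((n + k)!⁻¹ : 𝕂) • a ^ (n + k))
      (exp a - ∑ m ∈ range n, (m !⁻¹ : 𝕂) • a ^ m) := by
    simpa only [add_comm _ n] using
      (hasSum_nat_add_iff' n).mpr (exp_series_hasSum_exp' (𝕂 := 𝕂) a)
  have hexp : HasSum (fun k => ‖a‖ ^ n / n ! * (‖a‖ ^ k / k !))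
      (‖a‖ ^ n / n ! * Real.exp ‖a‖) := by
    rw [Real.exp_eq_exp_ℝ]
    exact (expSeries_div_hasSum_exp ‖a‖).mul_left _
  refine htail.norm_le_of_bounded hexp fun k => ?_
  have hfact : (n ! * k ! : ℝ) ≤ (n + k)! := by
    exact_mod_cast Nat.le_of_dvd (factorial_pos _) (factorial_mul_factorial_dvd_factorial_add n k)
  calc ‖((n + k)!⁻¹ : 𝕂) • a ^ (n + k)‖ ≤ ‖a‖ ^ (n + k) / (n + k)! := by
        rw [norm_smul, norm_inv, RCLike.norm_natCast, inv_mul_eq_div]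
        gcongr
        exact norm_pow_le' a (by omega)
    _ ≤ ‖a‖ ^ (n + k) / (n ! * k !) := by gcongr
    _ = ‖a‖ ^ n / n ! * (‖a‖ ^ k / k !) := by rw [pow_add, mul_div_mul_comm]

theorem Orthonormal.inner_right_eq_zero_of_mem_span {𝕜 E ι : Type*} [RCLike 𝕜]
    [NormedAddCommGroup E] [InnerProductSpace 𝕜 E] {φ : ι → E} (hφ : Orthonormal 𝕜 φ)
    {s : Set ι} {i : ι} (hi : i ∉ s) {v : E} (hv : v ∈ Submodule.span 𝕜 (φ '' s)) :
    inner 𝕜 (φ i) v = 0 := by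
  rw [← Submodule.mem_orthogonal_singleton_iff_inner_right]
  refine Submodule.span_le.mpr ?_ hv
  rintro _ ⟨j, hj, rfl⟩
  exact Submodule.mem_orthogonal_singleton_iff_inner_right.mpr
    (hφ.2 (ne_of_mem_of_not_mem hj hi).symm)

section Filtration

variable {R M : Type*} [Semiring R] [AddCommMonoid M] [Module R M] {φ : ℕ → M}

theorem pow_apply_mem_span_image_Iic {T : Module.End R M}
    (hT : ∀ j, T (φ j) ∈ Submodule.span R (φ '' Set.Iic (j + 1))) (n : ℕ) :
    (T ^ n) (φ 0) ∈ Submodule.span R (φ '' Set.Iic n) := by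
  induction n with
  | zero => exact Submodule.subset_span ⟨0, Set.mem_Iic.mpr le_rfl, rfl⟩
  | succ n ih =>
    rw [pow_succ', Module.End.mul_apply]
    refine (Submodule.span_le (p := (Submodule.span R _).comap T)).mpr ?_ ih
    rintro _ ⟨j, hj, rfl⟩
    exact Submodule.span_mono (Set.image_mono (Set.Iic_subset_Iic.mpr (by simpa using hj))) (hT j)

theorem add_apply_mem_span_image_Iic_succ {Δ F : Module.End R M} {d : ℕ → R}
    (hdiag : ∀ j, Δ (φ j) = d j • φ j)
    (htri : ∀ j, F (φ j) ∈ Submodule.span R {φ (j - 1), φ j, φ (j + 1)}) (j : ℕ) :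
    (Δ + F) (φ j) ∈ Submodule.span R (φ '' Set.Iic (j + 1)) := by
  have hmem : ∀ i ≤ j + 1, φ i ∈ Submodule.span R (φ '' Set.Iic (j + 1)) :=
    fun i hi => Submodule.subset_span ⟨i, hi, rfl⟩
  rw [LinearMap.add_apply, hdiag]
  refine add_mem (Submodule.smul_mem _ _ (hmem j (by omega))) ?_
  refine (Submodule.span_le.mpr ?_) (htri j)
  rintro _ (rfl | rfl | rfl) <;> exact hmem _ (by omega)

end Filtration

theorem Orthonormal.norm_inner_exp_apply_le {𝕜 H : Type*} [RCLike 𝕜] [NormedAddCommGroup H]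
    [InnerProductSpace 𝕜 H] [CompleteSpace H] {φ : ℕ → H} (hφ : Orthonormal 𝕜 φ)
    {A : H →L[𝕜] H} (hA : ∀ j, A (φ j) ∈ Submodule.span 𝕜 (φ '' Set.Iic (j + 1)))
    {l : ℕ} (hl : 0 < l) :
    ‖inner 𝕜 (exp A (φ 0)) (φ l)‖ ≤ ‖A‖ ^ l / l.factorial * Real.exp ‖A‖ := by
  set P := ∑ m ∈ Finset.range l, ((m.factorial : 𝕜)⁻¹) • A ^ m
  have hP : P (φ 0) ∈ Submodule.span 𝕜 (φ '' Set.Iic (l - 1)) := by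
    rw [sum_apply]
    refine Submodule.sum_mem _ fun m hm => Submodule.smul_mem _ _ ?_
    have h := pow_apply_mem_span_image_Iic (T := (A : H →ₗ[𝕜] H)) hA m
    rw [← ContinuousLinearMap.toLinearMap_pow] at h
    refine Submodule.span_mono (Set.image_mono (Set.Iic_subset_Iic.mpr ?_)) h
    have := Finset.mem_range.mp hm
    omega
  calc ‖inner 𝕜 (exp A (φ 0)) (φ l)‖ = ‖inner 𝕜 (φ l) ((exp A - P) (φ 0))‖ := by
        rw [norm_inner_symm, sub_apply, inner_sub_right,
          hφ.inner_right_eq_zero_of_mem_span (by simp; omega) hP, sub_zero]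
    _ ≤ ‖φ l‖ * ‖(exp A - P) (φ 0)‖ := norm_inner_le_norm _ _
    _ ≤ ‖exp A - P‖ := by simpa [hφ.1 l, hφ.1 0] using (exp A - P).le_opNorm (φ 0)
    _ ≤ ‖A‖ ^ l / l.factorial * Real.exp ‖A‖ := norm_exp_sub_sum_range_le A hl

theorem duhamel_iteration_offdiagonal_bound_general {H : Type*} [NormedAddCommGroup H]
    [InnerProductSpace ℂ H] [CompleteSpace H]
    (φ : ℕ → H) (hφ : Orthonormal ℂ φ)
    (Δ F : H →L[ℂ] H) (d : ℕ → ℂ) (hdiag : ∀ j, Δ (φ j) = d j • φ j)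
    (htri : ∀ j, F (φ j) ∈ Submodule.span ℂ {φ (j - 1), φ j, φ (j + 1)}) :
    ∃ C₁ > (0 : ℝ), ∀ l : ℕ, 1 ≤ l → ∀ s ∈ Set.Icc (0 : ℝ) 1,
      ‖(inner ℂ (NormedSpace.exp (-(s • (Δ + F))) (φ 0)) (φ l) : ℂ)‖ ≤
        C₁ ^ l * s ^ l / (Nat.factorial ((l + 1) / 2)) := by
  set M := ‖Δ + F‖
  have hM : 0 ≤ M := norm_nonneg _
  have hexp : 1 ≤ Real.exp M := Real.one_le_exp hM
  refine ⟨(M + 1) * Real.exp M, by positivity, fun l hl s ⟨hs0, hs1⟩ => ?_⟩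
  have hA : ‖-(s • (Δ + F))‖ ≤ s * M := by rw [norm_neg, norm_smul, Real.norm_of_nonneg hs0]
  have hstep (j : ℕ) : (-(s • (Δ + F))) (φ j) ∈ Submodule.span ℂ (φ '' Set.Iic (j + 1)) :=
    neg_mem (Submodule.smul_of_tower_mem _ s
      (add_apply_mem_span_image_Iic_succ (Δ := (Δ : H →ₗ[ℂ] H)) (F := F) hdiag htri j))
  calc _ ≤ (s * M) ^ l / l.factorial * Real.exp (s * M) := by
        refine (hφ.norm_inner_exp_apply_le hstep hl).trans ?_
        gcongr
    _ ≤ (s * M) ^ l / l.factorial * Real.exp M := by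
        gcongr
        nlinarith
    _ = s ^ l * (M ^ l * Real.exp M) / l.factorial := by ring
    _ ≤ s ^ l * ((M + 1) ^ l * Real.exp M ^ l) / ((l + 1) / 2).factorial := by
        gcongr
        · linarith
        · exact le_self_pow₀ hexp (by omega)
        · omega
    _ = ((M + 1) * Real.exp M) ^ l * s ^ l / ((l + 1) / 2).factorial := by
        rw [mul_pow]
        ring

/-- Iterated-Duhamel bound: if `Δ` is diagonal and `F` tridiagonal in an orthonormal basis
`{φ_j}`, `‖F‖ ≤ C`, and the semigroups `e^{-sD}` (`D = Δ + F`) and `e^{-sΔ}` are uniformly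
bounded on `s ∈ [0,1]`, then `|⟪e^{-sD}φ₀, φ_l⟫| ≤ C₁^l s^l / ⌈l/2⌉!`. -/
theorem duhamel_iteration_offdiagonal_bound {H : Type*} [NormedAddCommGroup H]
    [InnerProductSpace ℂ H] [CompleteSpace H]
    (φ : ℕ → H) (hφ : Orthonormal ℂ φ)
    (Δ F : H →L[ℂ] H) (d : ℕ → ℂ) (hdiag : ∀ j, Δ (φ j) = d j • φ j)
    (htri : ∀ j, F (φ j) ∈ Submodule.span ℂ {φ (j - 1), φ j, φ (j + 1)})
    (C : ℝ) (hC : 0 < C) (hF : ‖F‖ ≤ C)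
    (Cb : ℝ)
    (hsg : ∀ s ∈ Set.Icc (0 : ℝ) 1,
      ‖NormedSpace.exp (-(s • (Δ + F)))‖ ≤ Cb ∧ ‖NormedSpace.exp (-(s • Δ))‖ ≤ Cb) :
    ∃ C₁ > (0 : ℝ), ∀ l : ℕ, 1 ≤ l → ∀ s ∈ Set.Icc (0 : ℝ) 1,
      ‖(inner ℂ (NormedSpace.exp (-(s • (Δ + F))) (φ 0)) (φ l) : ℂ)‖ ≤
        C₁ ^ l * s ^ l / (Nat.factorial ((l + 1) / 2)) :=
  duhamel_iteration_offdiagonal_bound_general φ hφ Δ F d hdiag htri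
end

section
/- Itzykson–Zuber type formula on Sp(2)/Sp(1)×Sp(1): for p ≠ 0, ∫ exp(-p S(Q)) dμ(Q) = (6/p²)(1 - 2/p + e^{-p}(1 + 2/p)), where S(Q) = |Q₁₂|² + |Q₁₄|² and dμ is the normalized invariant measure. Equivalently, with x = √S(Q) distributed with density 12 x³(1-x²) on [0,1], ∫₀¹ e^{-px²} · 12 x³(1-x²) dx = (6/p²)(1 - 2/p + e^{-p}(1 + 2/p)). -/
open Real MeasureTheory intervalIntegral

/-! After the substitution `t = x²` the integrand becomes `6 e^{-pt} t(1-t) dt`, whose primitive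
follows from two integrations by parts. -/

noncomputable def expMulQuadPrimitive (p t : ℝ) : ℝ :=
  -exp (-p * t) * (6 * t * (1 - t) / p + 6 * (1 - 2 * t) / p ^ 2 - 12 / p ^ 3)

lemma hasDerivAt_expMulQuadPrimitive {p : ℝ} (hp : p ≠ 0) (t : ℝ) :
    HasDerivAt (expMulQuadPrimitive p) (exp (-p * t) * (6 * t * (1 - t))) t := by
  have hexp : HasDerivAt (fun t => -exp (-p * t)) (-(exp (-p * t) * (-p * 1))) t :=
    (((hasDerivAt_id' t).const_mul (-p)).exp).neg
  have hpoly : HasDerivAt (fun t => 6 * t * (1 - t) / p + 6 * (1 - 2 * t) / p ^ 2 - 12 / p ^ 3)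
      ((6 * 1 * (1 - t) + 6 * t * (-1)) / p + 6 * (-(2 * 1)) / p ^ 2) t :=
    ((((hasDerivAt_id' t).const_mul 6).mul ((hasDerivAt_id' t).const_sub 1)).div_const p).add
      ((((hasDerivAt_id' t).const_mul 2).const_sub 1).const_mul 6 |>.div_const (p ^ 2))
      |>.sub_const (12 / p ^ 3)
  refine (hexp.mul hpoly).congr_deriv ?_
  field_simp
  ring

lemma hasDerivAt_expMulQuadPrimitive_sq {p : ℝ} (hp : p ≠ 0) (x : ℝ) :
    HasDerivAt (fun x => expMulQuadPrimitive p (x ^ 2))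
      (exp (-p * x ^ 2) * (12 * x ^ 3 * (1 - x ^ 2))) x := by
  refine ((hasDerivAt_expMulQuadPrimitive hp (x ^ 2)).comp x (hasDerivAt_pow 2 x)).congr_deriv ?_
  ring

/-- Itzykson–Zuber type formula on `Sp(2)/Sp(1)×Sp(1)`, reduced to one dimension: with
`x = √S(Q)` distributed with density `12x³(1-x²)` on `[0,1]`, for `p ≠ 0`,
`∫₀¹ e^{-px²} · 12x³(1-x²) dx = (6/p²)(1 - 2/p + e^{-p}(1 + 2/p))`. -/
theorem itzykson_zuber_sp2 (p : ℝ) (hp : p ≠ 0) :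
    ∫ x in (0 : ℝ)..1, Real.exp (-p * x ^ 2) * (12 * x ^ 3 * (1 - x ^ 2)) =
      6 / p ^ 2 * (1 - 2 / p + Real.exp (-p) * (1 + 2 / p)) := by
  have hint : IntervalIntegrable
      (fun x => Real.exp (-p * x ^ 2) * (12 * x ^ 3 * (1 - x ^ 2))) volume 0 1 :=
    (by fun_prop : Continuous _).intervalIntegrable 0 1
  rw [integral_eq_sub_of_hasDerivAt (fun x _ => hasDerivAt_expMulQuadPrimitive_sq hp x) hint]
  simp only [expMulQuadPrimitive]
  norm_num
  field_simp
  ring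
end

section
/- With x = √S(Q) having density 12x³(1-x²) on [0,1]: ∫₀¹ exp(iπξ - 2iπξx²) · 12x³(1-x²) dx = 3(sin(πξ)/(πξ)³ - cos(πξ)/(πξ)²) for all real ξ ≠ 0. -/
open Real Complex MeasureTheory intervalIntegral

/-- With `x = √S(Q)` having density `12x³(1-x²)` on `[0,1]`:
`∫₀¹ exp(iπξ - 2iπξx²) · 12x³(1-x²) dx = 3(sin(πξ)/(πξ)³ - cos(πξ)/(πξ)²)` for `ξ ≠ 0`. -/
theorem integral_DS (ξ : ℝ) (hξ : ξ ≠ 0) :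
    ∫ x in (0 : ℝ)..1,
        Complex.exp (π * ξ * Complex.I - 2 * π * ξ * (x : ℂ) ^ 2 * Complex.I) *
          ((12 * x ^ 3 * (1 - x ^ 2) : ℝ) : ℂ)
      = ((3 * (Real.sin (π * ξ) / (π * ξ) ^ 3 - Real.cos (π * ξ) / (π * ξ) ^ 2) : ℝ) : ℂ) := by
  have hπ : ((π : ℂ)) ≠ 0 := by exact_mod_cast Real.pi_ne_zero
  have hξ' : ((ξ : ℂ)) ≠ 0 := by exact_mod_cast hξ
  have hpc : ((π : ℂ) * ξ) ≠ 0 := mul_ne_zero hπ hξ'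
  set a : ℂ := -2 * π * ξ * Complex.I with ha
  have haa : a ≠ 0 := by
    rw [ha, show (-2 * (π:ℂ) * ξ * Complex.I) = (-2 * ((π:ℂ)*ξ)) * Complex.I by ring]
    exact mul_ne_zero (mul_ne_zero (by norm_num) hpc) Complex.I_ne_zero
  have ha2 : a ^ 2 = -(4 * ((π:ℂ)*ξ) ^ 2) := by
    rw [ha, show (-2 * (π:ℂ) * ξ * Complex.I) ^ 2 = (4 * ((π:ℂ)*ξ) ^ 2) * Complex.I ^ 2 by ring,
      Complex.I_sq]; ring
  have ha3 : a ^ 3 = 8 * ((π:ℂ)*ξ) ^ 3 * Complex.I := by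
    rw [ha, show (-2 * (π:ℂ) * ξ * Complex.I) ^ 3
        = (-(8 * ((π:ℂ)*ξ) ^ 3)) * (Complex.I ^ 2 * Complex.I) by ring, Complex.I_sq]; ring
  clear_value a
  set F : ℝ → ℂ := fun x =>
    Complex.exp (π * ξ * Complex.I + a * (x:ℂ)^2) *
      (6 * (a^2 * ((x:ℂ)^2 - (x:ℂ)^4) - a * (1 - 2*(x:ℂ)^2) - 2)) / a^3 with hF
  have hderiv : ∀ x ∈ Set.uIcc (0:ℝ) 1, HasDerivAt F
      (Complex.exp (π * ξ * Complex.I - 2 * π * ξ * (x : ℂ) ^ 2 * Complex.I) *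
        ((12 * x ^ 3 * (1 - x ^ 2) : ℝ) : ℂ)) x := by
    intro x _
    have hx : HasDerivAt (fun x : ℝ => ((x:ℝ):ℂ)) 1 x := by
      simpa using (hasDerivAt_id x).ofReal_comp
    have hx2 : HasDerivAt (fun x : ℝ => ((x:ℝ):ℂ)^2) (2*(x:ℂ)) x := by
      have := hx.mul hx
      simp only [one_mul, mul_one] at this
      have he : (fun x : ℝ => ((x:ℝ):ℂ)^2) = fun x : ℝ => ((x:ℝ):ℂ) * ((x:ℝ):ℂ) := by
        funext y; ring
      rw [he, two_mul]; exact this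
    have hx4 : HasDerivAt (fun x : ℝ => ((x:ℝ):ℂ)^4) (4*(x:ℂ)^3) x := by
      have := hx2.mul hx2
      have he : (fun x : ℝ => ((x:ℝ):ℂ)^4) = fun x : ℝ => ((x:ℝ):ℂ)^2 * ((x:ℝ):ℂ)^2 := by
        funext y; ring
      rw [he, show (4*(x:ℂ)^3) = 2*(x:ℂ) * (x:ℂ)^2 + (x:ℂ)^2 * (2*(x:ℂ)) by ring]
      exact this
    have hg : HasDerivAt (fun x : ℝ => π * ξ * Complex.I + a * ((x:ℝ):ℂ)^2) (a * (2*(x:ℂ))) x :=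
      (hx2.const_mul a).const_add _
    have he := hg.cexp
    have hpoly : HasDerivAt (fun x : ℝ =>
        6 * (a^2 * (((x:ℝ):ℂ)^2 - ((x:ℝ):ℂ)^4) - a * (1 - 2*((x:ℝ):ℂ)^2) - 2))
        (6 * (a^2 * (2*(x:ℂ) - 4*(x:ℂ)^3) - a * (-(2*(2*(x:ℂ)))) - 0)) x := by
      apply HasDerivAt.const_mul
      apply HasDerivAt.sub
      apply HasDerivAt.sub
      · exact (hx2.sub hx4).const_mul (a^2)
      · exact ((hx2.const_mul 2).const_sub 1).const_mul a
      · exact hasDerivAt_const x _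
    have hmul := (he.mul hpoly).div_const (a^3)
    have hexp : π * ξ * Complex.I - 2 * π * ξ * (x : ℂ) ^ 2 * Complex.I
        = π * ξ * Complex.I + a * ((x:ℝ):ℂ)^2 := by rw [ha]; ring
    rw [show F = fun x : ℝ => Complex.exp (π * ξ * Complex.I + a * ((x:ℝ):ℂ)^2) *
      (6 * (a^2 * (((x:ℝ):ℂ)^2 - ((x:ℝ):ℂ)^4) - a * (1 - 2*((x:ℝ):ℂ)^2) - 2)) / a^3 from hF,
      hexp]
    convert hmul using 1
    · rfl
    · rfl
    push_cast
    field_simp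
    ring
  have hcont : IntervalIntegrable (fun x : ℝ =>
      Complex.exp (π * ξ * Complex.I - 2 * π * ξ * (x : ℂ) ^ 2 * Complex.I) *
        ((12 * x ^ 3 * (1 - x ^ 2) : ℝ) : ℂ)) MeasureTheory.volume 0 1 := by
    apply Continuous.intervalIntegrable
    fun_prop
  rw [intervalIntegral.integral_eq_sub_of_hasDerivAt hderiv hcont]
  simp only [hF]
  norm_num
  have E1 : Complex.exp ((π:ℂ) * ξ * Complex.I + a) =
      Complex.cos ((π:ℂ)*ξ) - Complex.sin ((π:ℂ)*ξ) * Complex.I := by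
    rw [ha, show (π:ℂ) * ξ * Complex.I + (-2*(π:ℂ)*ξ*Complex.I) = (-((π:ℂ)*ξ)) * Complex.I by ring,
      Complex.exp_mul_I, Complex.cos_neg, Complex.sin_neg]
    ring
  have E0 : Complex.exp ((π:ℂ) * ξ * Complex.I) =
      Complex.cos ((π:ℂ)*ξ) + Complex.sin ((π:ℂ)*ξ) * Complex.I := by
    rw [show (π:ℂ) * ξ * Complex.I = ((π:ℂ)*ξ) * Complex.I by ring, Complex.exp_mul_I]
  rw [E1, E0, ha3, ha]
  have hI := Complex.I_ne_zero
  field_simp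
  ring_nf
end
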